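/- arXiv:1403.5952 — 4 statements merged into one kernel-verified Lean document; each statement's English description precedes it below -/
import Mathlib

section
/- (Equivalence with coalescing) Let E be the constraint system a_i ⊑ H_i(a_1,…,a_n) for monotone H_i : Lⁿ → L on a finite-height lattice L, with maximum solution (A_1,…,A_n). Suppose 1 ≤ m ≤ n and A_i = A_m for all 1 ≤ i ≤ m. Define the coalesced system E_coal on variables b_m,…,b_n by: for each 1 ≤ i ≤ m the constraint b_m ⊑ H_i(b_m,…,b_m,b_{m+1},…,b_n), and for each m < i ≤ n the constraint b_i ⊑ H_i(b_m,…,b_m,b_{m+1},…,b_n). Then the maximum solution of E_coal is (A_m, A_{m+1},…,A_n). -/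
/-! A solution `b` of the coalesced system, read as the assignment `j ↦ b (max j m)`, is
literally a solution of the original system, hence lies below `A`; and `A` is itself of
this form because it is constant on the coordinates `≤ m`. -/

theorem comp_max_eq_self_of_forall_le {ι α : Type*} [LinearOrder ι] {A : ι → α} {m : ι}
    (h : ∀ i ≤ m, A i = A m) : (fun j => A (max j m)) = A := by
  funext j
  rcases le_total j m with hj | hj
  · rw [max_eq_right hj, h j hj]
  · rw [max_eq_left hj]

theorem stmt1_general {L : Type*} [Lattice L] {n : ℕ}
    (H : Fin n → (Fin n → L) → L)
    (m : Fin n) (A : Fin n → L)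
    (hsol : ∀ i, A i ≤ H i A)
    (hmax : ∀ B : Fin n → L, (∀ i, B i ≤ H i B) → ∀ i, B i ≤ A i)
    (hcoal : ∀ i, i ≤ m → A i = A m) :
    (∀ i, A (max i m) ≤ H i fun j => A (max j m)) ∧
      ∀ b : Fin n → L, (∀ i, b (max i m) ≤ H i fun j => b (max j m)) →
        ∀ i, b (max i m) ≤ A (max i m) := by
  have hA := comp_max_eq_self_of_forall_le hcoal
  refine ⟨fun i => ?_, fun b hb i => ?_⟩
  · rw [hA, congrFun hA i]
    exact hsol i
  · rw [congrFun hA i]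
    exact hmax (fun j => b (max j m)) hb i

/-- Equivalence with coalescing: if `A` is the maximum solution of the monotone
constraint system `a i ⊑ H i a` over a finite-height lattice, and the first
coordinates `A i` for `i ≤ m` all agree with `A m`, then coalescing those
variables into the single variable indexed by `m` (i.e., evaluating every `H i`
on the assignment `j ↦ b (max j m)`) yields a system whose maximum solution is
the corresponding restriction of `A`. -/
theorem stmt1 {L : Type*} [Lattice L] [OrderTop L] [WellFoundedGT L] {n : ℕ}
    (H : Fin n → (Fin n → L) → L) (hmono : ∀ i, Monotone (H i))
    (m : Fin n) (A : Fin n → L)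
    (hsol : ∀ i, A i ≤ H i A)
    (hmax : ∀ B : Fin n → L, (∀ i, B i ≤ H i B) → ∀ i, B i ≤ A i)
    (hcoal : ∀ i, i ≤ m → A i = A m) :
    (∀ i, A (max i m) ≤ H i fun j => A (max j m)) ∧
      ∀ b : Fin n → L, (∀ i, b (max i m) ≤ H i fun j => b (max j m)) →
        ∀ i, b (max i m) ≤ A (max i m) :=
  stmt1_general H m A hsol hmax hcoal
end

section
/- In a rooted directed graph where every node is reachable from the entry, the dominance relation (n dominates n' iff every path from the entry to n' passes through n) is a partial order, and the set of dominators of any node is totally ordered by dominance (so every node other than the entry has a unique immediate dominator). -/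
/-!
Cutting a path at a vertex and splicing path pieces together gives everything. If `a` and `b`
dominate each other and `a ≠ b`, the prefix of a path to `a` ending at the first `b` passes
through `a`, and its own prefix ending at `a` is a path to `a` that misses `b`. If `a` and `b`
both dominate `n` but neither dominates the other, cut a path to `n` after the last `a`: if `b`
occurs in the tail, the part after that `b` appended to a path to `b` avoiding `a` reaches `n`
without `a`; otherwise the tail appended to a path to `a` avoiding `b` reaches `n` without `b`.
The strict dominators of `n` all lie on one path to `n`, so they form a finite chain, and its
greatest element is the immediate dominator.
-/

/-- A path in a directed graph `E` from `a` to `b`, given as the list of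
visited vertices. -/
def IsPath {V : Type*} (E : V → V → Prop) (l : List V) (a b : V) : Prop :=
  l.head? = some a ∧ l.getLast? = some b ∧ l.Chain' E

/-- `n` dominates `n'` (w.r.t. `entry`): every path from the entry to `n'`
contains `n`. -/
def Dom {V : Type*} (E : V → V → Prop) (entry n n' : V) : Prop :=
  ∀ l, IsPath E l entry n' → n ∈ l

theorem List.eq_append_cons_of_mem_last {α : Type*} {a : α} {l : List α} (h : a ∈ l) :
    ∃ l₁ l₂, l = l₁ ++ a :: l₂ ∧ a ∉ l₂ := by
  obtain ⟨l₁, l₂, hl, ha⟩ := List.eq_append_cons_of_mem (List.mem_reverse.2 h)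
  exact ⟨l₂.reverse, l₁.reverse, by simpa using congrArg List.reverse hl, by simpa using ha⟩

theorem IsChain.exists_forall_rel_of_finite {α : Type*} {r : α → α → Prop} [Std.Refl r]
    [IsTrans α r] {s : Set α} (hc : IsChain r s) (hs : s.Finite) (hne : s.Nonempty) :
    ∃ m ∈ s, ∀ x ∈ s, r x m := by
  have : Nonempty s := hne.to_subtype
  have : Fintype s := hs.fintype
  obtain ⟨m, hm⟩ := (hc.directed (f := id)).finset_le Finset.univ
  exact ⟨m, m.2, fun x hx => hm ⟨x, hx⟩ (Finset.mem_univ _)⟩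

namespace IsPath

variable {V : Type*} {E : V → V → Prop} {a b c : V} {l l₁ l₂ p : List V}

theorem start_mem (h : IsPath E l a b) : a ∈ l := List.mem_of_mem_head? h.1

theorem end_mem (h : IsPath E l a b) : b ∈ l := List.mem_of_getLast? h.2.1

theorem of_append_cons_left (h : IsPath E (l₁ ++ c :: l₂) a b) :
    IsPath E (l₁ ++ [c]) a c := by
  obtain ⟨hhead, -, hchain⟩ := h
  refine ⟨?_, List.getLast?_concat, (List.isChain_split.1 hchain).1⟩
  cases l₁ <;> simpa using hhead

theorem of_append_cons_right (h : IsPath E (l₁ ++ c :: l₂) a b) : IsPath E (c :: l₂) c b := by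
  obtain ⟨-, hlast, hchain⟩ := h
  refine ⟨rfl, ?_, (List.isChain_split.1 hchain).2⟩
  rw [List.getLast?_append] at hlast
  simpa using hlast

theorem append_tail (hp : IsPath E p a c) (hl : IsPath E (c :: l) c b) :
    IsPath E (p ++ l) a b := by
  obtain ⟨hp₁, hp₂, hp₃⟩ := hp
  obtain ⟨-, hl₂, hl₃⟩ := hl
  have hp_ne : p ≠ [] := by rintro rfl; simp at hp₁
  refine ⟨by rwa [List.head?_append_of_ne_nil _ hp_ne], ?_, ?_⟩
  · cases l with
    | nil => simpa [hp₂] using hl₂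
    | cons y ys => rw [List.getLast?_append]; simpa using hl₂
  · refine hp₃.append hl₃.tail ?_
    intro x hx y hy
    simp only [hp₂, Option.mem_def, Option.some.injEq] at hx
    exact hx ▸ hl₃.rel_head? hy

end IsPath

section Dom

variable {V : Type*} {E : V → V → Prop} {entry a b c n : V}

theorem dom_refl (n : V) : Dom E entry n n := fun _ h => h.end_mem

theorem dom_entry (n : V) : Dom E entry entry n := fun _ h => h.start_mem

theorem Dom.trans (hab : Dom E entry a b) (hbc : Dom E entry b c) : Dom E entry a c := by
  intro l hl
  obtain ⟨l₁, l₂, rfl⟩ := List.append_of_mem (hbc l hl)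
  rw [List.append_cons]
  exact (List.prefix_append _ _).subset (hab _ hl.of_append_cons_left)

instance : Std.Refl (Dom E entry) := ⟨dom_refl⟩

instance : IsTrans V (Dom E entry) := ⟨fun _ _ _ => Dom.trans⟩

theorem Dom.reachable (h : Dom E entry a n) (hn : ∃ l, IsPath E l entry n) :
    ∃ l, IsPath E l entry a := by
  obtain ⟨l, hl⟩ := hn
  obtain ⟨l₁, l₂, rfl⟩ := List.append_of_mem (h l hl)
  exact ⟨_, hl.of_append_cons_left⟩

theorem Dom.antisymm (ha : ∃ l, IsPath E l entry a) (hab : Dom E entry a b)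
    (hba : Dom E entry b a) : a = b := by
  by_contra hne
  obtain ⟨l, hl⟩ := ha
  obtain ⟨l₁, l₂, rfl, hb⟩ := List.eq_append_cons_of_mem (hba l hl)
  have hpb := hl.of_append_cons_left
  have ha₁ : a ∈ l₁ := by simpa [hne] using hab _ hpb
  obtain ⟨m₁, m₂, rfl⟩ := List.append_of_mem ha₁
  rw [List.append_assoc, List.cons_append] at hpb
  have : b ∈ m₁ := by simpa [Ne.symm hne] using hba _ hpb.of_append_cons_left
  exact hb (by simp [this])

theorem Dom.total (hn : ∃ l, IsPath E l entry n) (ha : Dom E entry a n) (hb : Dom E entry b n) :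
    Dom E entry a b ∨ Dom E entry b a := by
  refine or_iff_not_imp_left.2 fun hab q hq => by_contra fun hbq => ?_
  obtain ⟨p, hp, hap⟩ : ∃ p, IsPath E p entry b ∧ a ∉ p := by simpa [Dom] using hab
  obtain ⟨l, hl⟩ := hn
  obtain ⟨l₁, l₂, rfl, hal₂⟩ := List.eq_append_cons_of_mem_last (ha l hl)
  by_cases hbl₂ : b ∈ l₂
  · obtain ⟨m₁, m₂, rfl⟩ := List.append_of_mem hbl₂
    rw [← List.cons_append, ← List.append_assoc] at hl
    rcases List.mem_append.1 (ha _ (hp.append_tail hl.of_append_cons_right)) with hpa | hm₂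
    · exact hap hpa
    · exact hal₂ (by simp [hm₂])
  · exact (List.mem_append.1 (hb _ (hq.append_tail hl.of_append_cons_right))).elim hbq hbl₂

theorem finite_setOf_dom (hn : ∃ l, IsPath E l entry n) : {d | Dom E entry d n}.Finite := by
  obtain ⟨l, hl⟩ := hn
  exact l.finite_toSet.subset fun d hd => hd l hl

theorem existsUnique_immediate_dominator (hn : ∃ l, IsPath E l entry n) (hne : n ≠ entry) :
    ∃! d, (Dom E entry d n ∧ d ≠ n) ∧
      ∀ d', (Dom E entry d' n ∧ d' ≠ n) → Dom E entry d' d := by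
  obtain ⟨d, hd, hmax⟩ := IsChain.exists_forall_rel_of_finite (r := Dom E entry)
    (s := {d | Dom E entry d n ∧ d ≠ n}) (fun x hx y hy _ => Dom.total hn hx.1 hy.1)
    ((finite_setOf_dom hn).subset fun _ h => h.1) ⟨entry, dom_entry n, hne.symm⟩
  exact ⟨d, ⟨hd, hmax⟩, fun y ⟨hy, hymax⟩ =>
    Dom.antisymm (hy.1.reachable hn) (hmax y hy) (hymax d hd)⟩

end Dom

theorem stmt4_general {V : Type*} (E : V → V → Prop) (entry : V)
    (hreach : ∀ v, ∃ l, IsPath E l entry v) :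
    (∀ n, Dom E entry n n) ∧
    (∀ a b, Dom E entry a b → Dom E entry b a → a = b) ∧
    (∀ a b c, Dom E entry a b → Dom E entry b c → Dom E entry a c) ∧
    (∀ n' a b, Dom E entry a n' → Dom E entry b n' →
      Dom E entry a b ∨ Dom E entry b a) ∧
    (∀ n, n ≠ entry → ∃! d, (Dom E entry d n ∧ d ≠ n) ∧
      ∀ d', (Dom E entry d' n ∧ d' ≠ n) → Dom E entry d' d) :=
  ⟨dom_refl, fun a _ => Dom.antisymm (hreach a), fun _ _ _ => Dom.trans,
    fun n' _ _ => Dom.total (hreach n'), fun n => existsUnique_immediate_dominator (hreach n)⟩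

/-- In a rooted directed graph in which every node is reachable from the entry,
dominance is a partial order, the dominators of any node are totally ordered by
dominance, and every node other than the entry has a unique immediate
dominator. -/
theorem stmt4 {V : Type*} [Finite V] (E : V → V → Prop) (entry : V)
    (hreach : ∀ v, ∃ l, IsPath E l entry v) :
    (∀ n, Dom E entry n n) ∧
    (∀ a b, Dom E entry a b → Dom E entry b a → a = b) ∧
    (∀ a b c, Dom E entry a b → Dom E entry b c → Dom E entry a c) ∧
    (∀ n' a b, Dom E entry a n' → Dom E entry b n' →
      Dom E entry a b ∨ Dom E entry b a) ∧
    (∀ n, n ≠ entry → ∃! d, (Dom E entry d n ∧ d ≠ n) ∧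
      ∀ d', (Dom E entry d' n ∧ d' ≠ n) → Dom E entry d' d) :=
  stmt4_general E entry hreach
end

section
/- (Sparse ≡ dense) Consider a program in SSI form for a monotone PLV constraint system E_dense over a finite-height lattice L, with constraints [v]^p = [v]^p ∧ F_v^{s,p}([v_1]^s,…,[v_n]^s) for each variable v, program point p and predecessor s. Let (Y_v) be the maximum solution of the derived sparse constraint system (one constraint [v] ⊑ G_v^i([a],…,[b]) per definition point i of v, where G_v^i is the projection of F_v^{s,p} guaranteed by the LINK property). Then the assignment X_v^p = Y_v for p ∈ live(v) and X_v^p = ⊥ for p ∉ live(v) is the maximum solution of E_dense. -/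
/-!
On its live range a variable is only rewritten at its unique definition point: at every other
live edge SPLIT-DEF makes the transfer function the identity projection, and every live point is
reachable from the definition point along live edges. So any dense solution is, at each live
point, bounded by its value at the definition point, and INFO forces it to be `⊥` elsewhere. The
values at the definition points form a sparse solution, hence lie below the maximum sparse
solution `Y`; conversely, spreading `Y` over the live ranges is a dense solution.
-/

namespace SSI

variable {L P ι : Type*}

def IsDenseSolution [LE L] (preds : P → Set P) (F : ι → P → P → (ι → L) → L)
    (X : P → ι → L) : Prop :=
  ∀ p v, ∀ s ∈ preds p, X p v ≤ F v s p (X s)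

open scoped Classical in
noncomputable def denseOfSparse [Bot L] (live : ι → Set P) (Y : ι → L) : P → ι → L :=
  fun p u => if p ∈ live u then Y u else ⊥

-- LINK's projection `G_v^i` is encoded as `F_v^{s,p}` applied to the values of the variables
-- live at `s`, all other coordinates reading `⊥`.
def IsSparseSolution [LE L] [Bot L] (live : ι → Set P) (F : ι → P → P → (ι → L) → L)
    (D : ι → Set (P × P)) (Z : ι → L) : Prop :=
  ∀ v s p, (s, p) ∈ D v → Z v ≤ F v s p (denseOfSparse live Z s)

def LiveEdge (preds : P → Set P) (live : ι → Set P) (v : ι) (a b : P) : Prop :=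
  a ∈ preds b ∧ a ∈ live v ∧ b ∈ live v

section

variable {preds : P → Set P} {live : ι → Set P} {F : ι → P → P → (ι → L) → L}
  {D : ι → Set (P × P)}

theorem denseOfSparse_mono [Preorder L] [OrderBot L] :
    Monotone (denseOfSparse (L := L) live) := by
  intro Y Z hYZ p u
  by_cases hp : p ∈ live u <;> simp [denseOfSparse, hp, hYZ u]

theorem isDenseSolution_denseOfSparse [Preorder L] [OrderBot L]
    (hsplit : ∀ v s p, s ∈ preds p → p ∈ live v → (s, p) ∉ D v → F v s p = fun x => x v)
    (hbound : ∀ v s p, s ∈ preds p → p ∈ live v → s ∉ live v → (s, p) ∈ D v)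
    {Y : ι → L} (hY : IsSparseSolution live F D Y) :
    IsDenseSolution preds F (denseOfSparse live Y) := by
  intro p v s hs
  by_cases hp : p ∈ live v
  · by_cases hd : (s, p) ∈ D v
    · simpa [denseOfSparse, hp] using hY v s p hd
    · have hsv : s ∈ live v := by_contra fun hsv => hd (hbound v s p hs hp hsv)
      simp [hsplit v s p hs hp hd, denseOfSparse, hp, hsv]
  · simp [denseOfSparse, hp]

theorem IsDenseSolution.eq_bot_of_notMem_live [PartialOrder L] [OrderBot L]
    {X : P → ι → L} (hX : IsDenseSolution preds F X) (hne : ∀ p, (preds p).Nonempty)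
    (hinfo : ∀ v p, p ∉ live v → ∀ s ∈ preds p, F v s p = fun _ => ⊥)
    {p : P} {v : ι} (hp : p ∉ live v) : X p v = ⊥ := by
  obtain ⟨s, hs⟩ := hne p
  simpa [hinfo v p hp s hs] using hX p v s hs

theorem IsDenseSolution.le_of_reflTransGen_liveEdge [Preorder L] {X : P → ι → L}
    (hX : IsDenseSolution preds F X)
    (hsplit : ∀ v s p, s ∈ preds p → p ∈ live v → (s, p) ∉ D v → F v s p = fun x => x v)
    {v : ι} {pv : P} (hdef : ∀ s p, (s, p) ∈ D v → p = pv) {p : P}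
    (h : Relation.ReflTransGen (LiveEdge preds live v) pv p) : X p v ≤ X pv v := by
  induction h with
  | refl => exact le_rfl
  | @tail b c _ hbc ih =>
    obtain ⟨hpred, -, hc⟩ := hbc
    by_cases hd : (b, c) ∈ D v
    · rw [hdef b c hd]
    · have hcb := hX c v b hpred
      rw [hsplit v b c hpred hc hd] at hcb
      exact hcb.trans ih

variable [PartialOrder L] [OrderBot L] {X : P → ι → L} {pv : ι → P}

theorem IsDenseSolution.le_denseOfSparse_root (hX : IsDenseSolution preds F X)
    (hne : ∀ p, (preds p).Nonempty)
    (hinfo : ∀ v p, p ∉ live v → ∀ s ∈ preds p, F v s p = fun _ => ⊥)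
    (hsplit : ∀ v s p, s ∈ preds p → p ∈ live v → (s, p) ∉ D v → F v s p = fun x => x v)
    (hdef : ∀ v s p, (s, p) ∈ D v → p = pv v)
    (hreach : ∀ v, ∀ p ∈ live v, Relation.ReflTransGen (LiveEdge preds live v) (pv v) p) :
    X ≤ denseOfSparse live fun u => X (pv u) u := by
  intro p v
  by_cases hp : p ∈ live v
  · simpa [denseOfSparse, hp] using
      hX.le_of_reflTransGen_liveEdge hsplit (hdef v) (hreach v p hp)
  · simp [denseOfSparse, hp, hX.eq_bot_of_notMem_live hne hinfo hp]

theorem IsDenseSolution.isSparseSolution_root (hX : IsDenseSolution preds F X)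
    (hmono : ∀ v s p, Monotone (F v s p))
    (hpreds : ∀ v s p, (s, p) ∈ D v → s ∈ preds p)
    (hdef : ∀ v s p, (s, p) ∈ D v → p = pv v)
    (hXroot : X ≤ denseOfSparse live fun u => X (pv u) u) :
    IsSparseSolution live F D fun u => X (pv u) u := by
  intro v s p hd
  show X (pv v) v ≤ _
  rw [← hdef v s p hd]
  exact (hX p v s (hpreds v s p hd)).trans (hmono v s p (hXroot s))

end

end SSI

open SSI

open scoped Classical in
/-- Sparse ≡ dense: for a program in SSI form for a monotone PLV constraint
system (constraints `[v]^p ⊑ F v s p (x^s)` for every predecessor `s` of `p`),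
with the SSI properties encoded as hypotheses — INFO (`F` is constantly `⊥`
outside the live range), SPLIT-DEF (`F` is the trivial projection at non-def
edges inside live ranges), boundary defs, and VERSION/SSA (each live range has
a single definition point from which it is reachable through live-range
edges) — if `Y` is the maximum solution of the derived sparse system (one
constraint per definition edge of each variable), then `X v p := Y v` for
`p ∈ live v` and `⊥` otherwise is the maximum solution of the dense system. -/
theorem stmt9 {L P ι : Type*} [Lattice L] [BoundedOrder L]
    (preds : P → Set P) (live : ι → Set P)
    (F : ι → P → P → (ι → L) → L)
    (D : ι → Set (P × P))
    (hmono : ∀ v s p, Monotone (F v s p))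
    (hne : ∀ p : P, (preds p).Nonempty)
    (hinfo : ∀ v p, p ∉ live v → ∀ s ∈ preds p, F v s p = fun _ => ⊥)
    (hsplit : ∀ v s p, s ∈ preds p → p ∈ live v → (s, p) ∉ D v →
      F v s p = fun x => x v)
    (hD : ∀ v s p, (s, p) ∈ D v → s ∈ preds p ∧ p ∈ live v)
    (hbound : ∀ v s p, s ∈ preds p → p ∈ live v → s ∉ live v → (s, p) ∈ D v)
    (hroot : ∀ v, ∃ pv, (∀ s p, (s, p) ∈ D v → p = pv) ∧
      ∀ p ∈ live v, Relation.ReflTransGen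
        (fun a b => a ∈ preds b ∧ a ∈ live v ∧ b ∈ live v) pv p)
    (Y : ι → L)
    (hYsol : ∀ v s p, (s, p) ∈ D v →
      Y v ≤ F v s p fun u => if s ∈ live u then Y u else ⊥)
    (hYmax : ∀ Z : ι → L,
      (∀ v s p, (s, p) ∈ D v →
        Z v ≤ F v s p fun u => if s ∈ live u then Z u else ⊥) →
      ∀ v, Z v ≤ Y v) :
    (∀ p v, ∀ s ∈ preds p,
      (if p ∈ live v then Y v else ⊥) ≤
        F v s p fun u => if s ∈ live u then Y u else ⊥) ∧
    ∀ X : P → ι → L, (∀ p v, ∀ s ∈ preds p, X p v ≤ F v s p (X s)) →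
      ∀ p v, X p v ≤ if p ∈ live v then Y v else ⊥ := by
  refine ⟨isDenseSolution_denseOfSparse (live := live) hsplit hbound hYsol, fun X hX => ?_⟩
  choose pv hdef hreach using hroot
  have hXroot : X ≤ denseOfSparse live fun u => X (pv u) u :=
    IsDenseSolution.le_denseOfSparse_root hX hne hinfo hsplit hdef hreach
  have hrootY : (fun u => X (pv u) u) ≤ Y :=
    hYmax _ (IsDenseSolution.isSparseSolution_root hX hmono (fun v s p hd => (hD v s p hd).1)
      hdef hXroot)
  exact hXroot.trans (denseOfSparse_mono hrootY)
end

section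
/- (φ-placement at DF⁺ suffices for SPLIT-MEET) Let P be a set of CFG nodes containing all definition points of variable v (including a pseudo-definition at the entry). If a fresh definition of v (a φ-function) is inserted at every node of the iterated dominance frontier DF⁺(P), then for every node q and every path from the entry to q, the last definition of v encountered on the path is the same for all paths; i.e., exactly one definition of v reaches each program point. -/
/-- The dominance frontier of a node. -/
def DF {V : Type*} (E : V → V → Prop) (entry n : V) : Set V :=
  {n' | (∃ q, E q n' ∧ Dom E entry n q) ∧ ¬(Dom E entry n n' ∧ n ≠ n')}

/-- The iterated dominance frontier `DF⁺(P)` of a set of nodes. -/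
def DFplusSet {V : Type*} (E : V → V → Prop) (entry : V) (P : Set V) : Set V :=
  ⋂₀ {S | (⋃ n ∈ P, DF E entry n) ⊆ S ∧ ∀ z ∈ S, DF E entry z ⊆ S}

/-!
Let `D = P ∪ DF⁺(P)`; it contains the entry and is closed under `DF`. If `d` is the last
node of `D` on a path to `q`, then `d` dominates `q`: dominance by `d` propagates along an
edge `x → y` unless `y ∈ DF(d) ⊆ D`. For two paths with last `D`-nodes `d₁, d₂`, each `dᵢ`
dominates `q` and does not occur after `dⱼ` on the other path, so `d₁` and `d₂` dominate each
other, and mutually dominating reachable nodes coincide.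
-/

namespace List

variable {α : Type*}

lemma exists_eq_append_cons_notMem {a : α} {l : List α} (h : a ∈ l) :
    ∃ s t, l = s ++ a :: t ∧ a ∉ s := by
  induction l with
  | nil => cases h
  | cons c l ih =>
    by_cases hc : c = a
    · exact ⟨[], l, by simp [hc], by simp⟩
    · obtain ⟨s, t, rfl, hs⟩ := ih (by simpa [Ne.symm hc] using h)
      exact ⟨c :: s, t, rfl, by simp [hs, Ne.symm hc]⟩

lemma exists_eq_append_cons_of_getLast?_filter {p : α → Bool} {l : List α} {d : α}
    (h : (l.filter p).getLast? = some d) :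
    p d ∧ ∃ s t, l = s ++ d :: t ∧ ∀ x ∈ t, p x = false := by
  rw [getLast?_filter, find?_eq_some_iff_append] at h
  obtain ⟨hd, s, t, hrev, ht⟩ := h
  refine ⟨hd, t.reverse, s.reverse, ?_, by simpa using ht⟩
  rw [← reverse_reverse l, hrev]
  simp

end List

section Paths

variable {V : Type*} {E : V → V → Prop}

lemma IsPath.prefix {u w : List V} {x a b : V} (h : IsPath E (u ++ x :: w) a b) :
    IsPath E (u ++ [x]) a x := by
  obtain ⟨hhead, -, hchain⟩ := h
  refine ⟨?_, by simp, hchain.prefix ⟨w, by simp⟩⟩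
  cases u <;> simpa using hhead

lemma IsPath.suffix {u w : List V} {x a b : V} (h : IsPath E (u ++ x :: w) a b) :
    IsPath E (x :: w) x b := by
  obtain ⟨-, hlast, hchain⟩ := h
  exact ⟨rfl, by rwa [List.getLast?_append_cons] at hlast, hchain.suffix ⟨u, rfl⟩⟩

lemma IsPath.append {m t : List V} {a x b : V} (hm : IsPath E m a x)
    (ht : IsPath E (x :: t) x b) : IsPath E (m ++ t) a b := by
  obtain ⟨hhead, hlast, hchain⟩ := hm
  obtain ⟨m, rfl⟩ := List.getLast?_eq_some_iff.mp hlast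
  refine ⟨?_, ?_, ?_⟩
  · cases m <;> simpa using hhead
  · simpa using ht.2.1
  · show List.IsChain E _
    simpa using hchain.append_overlap ht.2.2 (by simp)

end Paths

namespace Dom

variable {V : Type*} {E : V → V → Prop} {entry : V}

lemma refl (d : V) : Dom E entry d d :=
  fun _ hl => List.mem_of_mem_getLast? hl.2.1

lemma of_edge {d x y : V} (hx : Dom E entry d x) (hxy : E x y) (hy : y ∉ DF E entry d) :
    Dom E entry d y := by
  by_contra h
  exact hy ⟨⟨x, hxy, hx⟩, fun h' => h h'.1⟩

lemma of_isPath {d x q : V} {t : List V} (hx : Dom E entry d x) (h : IsPath E (x :: t) x q)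
    (ht : ∀ y ∈ t, y ∉ DF E entry d) : Dom E entry d q := by
  induction t generalizing x with
  | nil => simpa [show x = q by simpa using h.2.1] using hx
  | cons y t ih =>
    have hy : Dom E entry d y := hx.of_edge (List.isChain_cons_cons.mp h.2.2).1 (ht y (by simp))
    exact ih hy (IsPath.suffix (u := [x]) h) fun z hz => ht z (by simp [hz])

lemma of_dom_of_isPath {a b q : V} {t : List V} (hb : Dom E entry b q)
    (ha : IsPath E (a :: t) a q) (hbt : b ∉ t) : Dom E entry b a := by
  intro m hm
  simpa [hbt] using hb _ (hm.append ha)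

lemma antisymm_s12 {a b : V} {l : List V} (hab : Dom E entry a b) (hba : Dom E entry b a)
    (hl : IsPath E l entry b) : a = b := by
  by_contra hne
  obtain ⟨u, w, rfl, hbu⟩ := List.exists_eq_append_cons_notMem (List.mem_of_mem_getLast? hl.2.1)
  have hu : IsPath E (u ++ [b]) entry b := hl.prefix
  have hau : a ∈ u := by simpa [hne] using hab _ hu
  obtain ⟨u', w', rfl⟩ := List.append_of_mem hau
  have hbu' : b ∈ u' ++ [a] := hba _ (IsPath.prefix (w := w' ++ [b]) (by simpa using hu))
  exact hbu (by simp_all)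

end Dom

section Placement

variable {V : Type*} {E : V → V → Prop} {entry : V}

lemma DF_subset_DFplusSet {P : Set V} {d : V} (hd : d ∈ P ∪ DFplusSet E entry P) :
    DF E entry d ⊆ DFplusSet E entry P := by
  intro y hy
  rw [DFplusSet, Set.mem_sInter]
  rintro S ⟨hPS, hS⟩
  rcases hd with hdP | hdS
  · exact hPS (Set.mem_biUnion hdP hy)
  · exact hS d (Set.mem_sInter.mp hdS S ⟨hPS, hS⟩) hy

theorem getLast?_filter_eq_of_isPath {D : Set V} [DecidablePred (· ∈ D)]
    (hentry : entry ∈ D) (hD : ∀ d ∈ D, DF E entry d ⊆ D) {q : V} {l₁ l₂ : List V}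
    (h₁ : IsPath E l₁ entry q) (h₂ : IsPath E l₂ entry q) :
    (l₁.filter fun x => decide (x ∈ D)).getLast? =
      (l₂.filter fun x => decide (x ∈ D)).getLast? := by
  have last_mem : ∀ {l : List V}, IsPath E l entry q →
      ∃ d, (l.filter fun x => decide (x ∈ D)).getLast? = some d := by
    intro l hl
    refine Option.ne_none_iff_exists'.mp fun hnone => ?_
    have hentry_l : entry ∈ l := List.mem_of_mem_head? hl.1
    have hempty := List.getLast?_eq_none_iff.mp hnone
    simpa [hentry] using List.filter_eq_nil_iff.mp hempty _ hentry_l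
  obtain ⟨d₁, hd₁⟩ := last_mem h₁
  obtain ⟨d₂, hd₂⟩ := last_mem h₂
  rw [hd₁, hd₂]
  obtain ⟨hd₁D, s₁, t₁, rfl, ht₁⟩ := List.exists_eq_append_cons_of_getLast?_filter hd₁
  obtain ⟨hd₂D, s₂, t₂, rfl, ht₂⟩ := List.exists_eq_append_cons_of_getLast?_filter hd₂
  simp only [decide_eq_true_eq, decide_eq_false_iff_not] at hd₁D hd₂D ht₁ ht₂
  have dom_q : ∀ {d : V} {t : List V}, d ∈ D → IsPath E (d :: t) d q → (∀ x ∈ t, x ∉ D) →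
      Dom E entry d q := fun hd h ht =>
    (Dom.refl _).of_isPath h fun y hy hyDF => ht y hy (hD _ hd hyDF)
  have hdom₁ := dom_q hd₁D h₁.suffix ht₁
  have hdom₂ := dom_q hd₂D h₂.suffix ht₂
  have h₂₁ : Dom E entry d₂ d₁ :=
    hdom₂.of_dom_of_isPath h₁.suffix fun h => ht₁ _ h hd₂D
  have h₁₂ : Dom E entry d₁ d₂ :=
    hdom₁.of_dom_of_isPath h₂.suffix fun h => ht₂ _ h hd₁D
  rw [h₁₂.antisymm_s12 h₂₁ h₂.prefix]

end Placement

open scoped Classical in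
/-- φ-placement at `DF⁺` suffices for SPLIT-MEET: if `P` contains all
definition points of `v` (including a pseudo-definition at the entry) and a
fresh definition is inserted at every node of `DF⁺(P)`, then for every node `q`
the last definition of `v` encountered along a path from the entry to `q` is
the same for all such paths — i.e. exactly one definition reaches each program
point. -/
theorem stmt12 {V : Type*} (E : V → V → Prop) (entry : V)
    (P : Set V) (hentry : entry ∈ P)
    (q : V) (l1 l2 : List V)
    (h1 : IsPath E l1 entry q) (h2 : IsPath E l2 entry q) :
    (l1.filter fun x => decide (x ∈ P ∪ DFplusSet E entry P)).getLast? =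
      (l2.filter fun x => decide (x ∈ P ∪ DFplusSet E entry P)).getLast? :=
  getLast?_filter_eq_of_isPath (D := P ∪ DFplusSet E entry P) (Or.inl hentry)
    (fun _ hd => (DF_subset_DFplusSet hd).trans Set.subset_union_right) h1 h2
end
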